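/- arXiv:1606.06974 — 2 statements merged into one kernel-verified Lean document; each statement's English description precedes it below -/
import Mathlib

section
/- Expression over-approximation (Lemma 2): Define a simple expression language E ::= const c | var x | arr e | E ⊕ E, with original semantics eval(e, σ) over a state σ containing an array a, and transformed semantics evalT(e, σ') returning a SET of values: constants and scalar variables give their singleton values, arr e1 in the transformed program gives {σ'(x_a)} if the (singleton) value of the transformed index expression equals σ'(i_a), and the set of all values otherwise; binary operators apply ⊕ pointwise to the cartesian product of the operand sets. If σ' represents σ at index σ'(i_a) and the original evaluation of every array index subexpression is deterministic, then eval(e, σ) ∈ evalT(e, σ'). -/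
/-- Expressions: constants, scalar variables, array reads, binary operations. -/
inductive Expr (V : Type) where
  | const : ℤ → Expr V
  | var : V → Expr V
  | arr : Expr V → Expr V
  | bin : (ℤ → ℤ → ℤ) → Expr V → Expr V → Expr V

/-- Original (concrete) semantics over a state with scalar part σs and array
part σa (the array is modeled as a total function on ℤ indices). -/
def eval {V : Type} (σs : V → ℤ) (σa : ℤ → ℤ) : Expr V → ℤ
  | .const c => c
  | .var x => σs x
  | .arr e => σa (eval σs σa e)
  | .bin f e1 e2 => f (eval σs σa e1) (eval σs σa e2)

open Classical in
/-- Transformed (abstract) semantics returning sets of values: an array read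
yields {x_a} when the index value-set is exactly {i_a}, and all values (nd())
otherwise; binary operators act pointwise on cartesian products. -/
noncomputable def evalT {V : Type} (σs : V → ℤ) (ia xa : ℤ) : Expr V → Set ℤ
  | .const c => {c}
  | .var x => {σs x}
  | .arr e => if evalT σs ia xa e = {ia} then {xa} else Set.univ
  | .bin f e1 e2 => Set.image2 f (evalT σs ia xa e1) (evalT σs ia xa e2)

/-- (σ1s, ia, xa) represents σ = (σs, σa) at index c. -/
def represents {V : Type} (σ1s : V → ℤ) (ia xa : ℤ) (σs : V → ℤ)
    (σa : ℤ → ℤ) (c : ℤ) : Prop :=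
  ia = c ∧ xa = σa c ∧ ∀ y : V, σ1s y = σs y


/-- Lemma 2, expression over-approximation: if the transformed
state represents the original state at index i_a, then the concrete value of
any expression is a member of its transformed value-set. -/
theorem stmt3 {V : Type} (σs σ1s : V → ℤ) (σa : ℤ → ℤ) (ia xa : ℤ)
    (hrep : represents σ1s ia xa σs σa ia)
    (e : Expr V) :
    eval σs σa e ∈ evalT σ1s ia xa e := by
  obtain ⟨hia, hxa, hsc⟩ := hrep
  induction e with
  | const c => simp [eval, evalT]
  | var x => simp [eval, evalT, hsc]
  | arr e ih =>
    simp only [eval, evalT]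
    split
    · next h =>
      rw [h] at ih
      simp at ih
      simp [ih, hia ▸ hxa]
    · exact Set.mem_univ _
  | bin f e1 e2 ih1 ih2 =>
    exact Set.mem_image2_of_mem ih1 ih2
end

section
/- Array assignment preserves representation: suppose σ' represents σ at index c. Let the original program execute a[e1] := e2 yielding σ_m which equals σ except σ_m(a[eval(e1,σ)]) = eval(e2,σ). Let the transformed statement produce σ'_m where σ'_m = σ'[x_a ↦ eval(e2,σ)] if eval(e1,σ) = c, and σ'_m = σ' otherwise. Then σ'_m represents σ_m at index c. -/
/-- array assignment preserves representation. The original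
program executes a[e1] := e2, updating cell eval(e1,σ); the transformed program
updates the witness value x_a exactly when eval(e1,σ) = c (the precise case,
where transformed evaluation yields the original values). -/
theorem stmt6 {V : Type} (σs σ1s : V → ℤ) (σa : ℤ → ℤ) (ia xa c : ℤ)
    (hrep : represents σ1s ia xa σs σa c)
    (e1 e2 : Expr V) :
    represents σ1s ia
      (if eval σs σa e1 = c then eval σs σa e2 else xa)
      σs (Function.update σa (eval σs σa e1) (eval σs σa e2)) c := by
  obtain ⟨h1, h2, h3⟩ := hrep
  refine ⟨h1, ?_, h3⟩
  by_cases h : eval σs σa e1 = c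
  · simp [h, Function.update]
  · simp [h, Function.update, h2, Ne.symm h]
end
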